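/- arXiv:1412.5096 — 2 statements merged into one kernel-verified Lean document; each statement's English description precedes it below -/
import Mathlib

section
/- Suppose 1 ≤ m ≤ 2j+1 and gcd(m, 2j+1) = gcd(m+1, 2j+1) = 1. Then for every (s,t) ∈ Z^2, the number of lattice points of Λ(m,j) in the translate (s,t)+S(j) is exactly j. -/
/-!
The column `x = s + i` (`0 ≤ i < 2j`) of the translated staircase has height `2j - i < 2j + 1`,
so it contains at most one point of the lattice: the one at height
`r i = ((s + i) m - t) % (2j + 1)` above `t`, which lies in the staircase iff `r i + i < 2j`.
Put `n = 2j + 1`. Since `m` and `m + 1` are units mod `n`, both `i ↦ r i` and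
`i ↦ (r i + i) % n` permute `{0, …, n - 1}` for `i < n`; comparing `∑ (r i + i)` with
`∑ (r i + i) % n` shows that `r i + i` wraps past `n` for exactly `(n - 1) / 2 = j` indices.
Of the remaining `j + 1`, exactly one has `r i + i = 2j`, and `i = 2j` never qualifies.
-/

def Lam (m j : ℕ) : Set (ℝ × ℝ) :=
  {p | ∃ c₁ c₂ : ℤ, p = ((c₁ : ℝ), (c₁ : ℝ) * m + (c₂ : ℝ) * (2 * j + 1))}

def Sstair (j : ℕ) : Set (ℝ × ℝ) :=
  ⋃ i ∈ Finset.range (2 * j),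
    Set.Ico (i : ℝ) ((i : ℝ) + 1) ×ˢ Set.Ico (0 : ℝ) (2 * (j : ℝ) - i)

open Finset

section Residues

variable {n : ℕ} {b : ℤ}

theorem emod_eq_ite_of_lt_two_mul {x d : ℤ} (h₀ : 0 ≤ x) (h₁ : x < 2 * d) :
    x % d = if d ≤ x then x - d else x := by
  split_ifs with h
  · rw [Int.emod_eq_sub_self_emod, Int.emod_eq_of_lt (by omega) (by omega)]
  · exact Int.emod_eq_of_lt h₀ (by omega)

theorem injOn_emod_add_mul (a : ℤ) (hb : IsCoprime (n : ℤ) b) :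
    Set.InjOn (fun i : ℕ => (a + b * i) % n) (range n) := by
  intro i hi i' hi' h
  simp only [coe_range, Set.mem_Iio] at hi hi'
  have hdvd : (n : ℤ) ∣ i' - i := by
    refine hb.dvd_of_dvd_mul_left ?_
    simpa [mul_sub] using (Int.ModEq.add_left_cancel' a h).dvd
  have := Int.eq_zero_of_dvd_of_natAbs_lt_natAbs hdvd (by omega)
  omega

theorem image_emod_add_mul_range (a : ℤ) (hb : IsCoprime (n : ℤ) b) :
    (range n).image (fun i : ℕ => (a + b * i) % n) = Ico 0 (n : ℤ) := by
  refine eq_of_subset_of_card_le (fun x hx => ?_) ?_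
  · obtain ⟨i, hi, rfl⟩ := mem_image.1 hx
    have hn : (0 : ℤ) < n := by have := mem_range.1 hi; omega
    exact mem_Ico.2 ⟨Int.emod_nonneg _ hn.ne', Int.emod_lt_of_pos _ hn⟩
  · simp [card_image_of_injOn (injOn_emod_add_mul a hb)]

theorem sum_emod_add_mul_range (a : ℤ) (hb : IsCoprime (n : ℤ) b) :
    ∑ i ∈ range n, (a + b * i) % n = ∑ x ∈ Ico 0 (n : ℤ), x := by
  rw [← image_emod_add_mul_range a hb, sum_image (injOn_emod_add_mul a hb)]

theorem card_filter_emod_add_mul_eq (a : ℤ) (hb : IsCoprime (n : ℤ) b) {c : ℤ} (hc₀ : 0 ≤ c)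
    (hc : c < n) : #{i ∈ range n | (a + b * (i : ℕ)) % n = c} = 1 := by
  obtain ⟨i₀, hi₀, rfl⟩ := mem_image.1 <|
    (image_emod_add_mul_range a hb).symm ▸ mem_Ico.2 ⟨hc₀, hc⟩
  refine card_eq_one.2 ⟨i₀, ext fun i => ⟨fun hi => ?_, fun hi => ?_⟩⟩
  · obtain ⟨hi, h⟩ := mem_filter.1 hi
    exact mem_singleton.2 (injOn_emod_add_mul a hb hi hi₀ h)
  · rw [mem_singleton.1 hi]
    exact mem_filter.2 ⟨hi₀, rfl⟩

theorem emod_add_add_one_mul (a m i : ℤ) (d : ℤ) :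
    (a + (m + 1) * i) % d = ((a + m * i) % d + i) % d := by
  rw [Int.emod_add_emod]; ring_nf

theorem card_filter_le_emod_add_mul_add (a m : ℤ) (hm : IsCoprime (n : ℤ) m)
    (hm' : IsCoprime (n : ℤ) (m + 1)) :
    #{i ∈ range n | (n : ℤ) ≤ (a + m * (i : ℕ)) % n + i} * 2 = n - 1 := by
  set K := #{i ∈ range n | (n : ℤ) ≤ (a + m * (i : ℕ)) % n + i}
  have hpoint : ∀ i ∈ range n, (a + (m + 1) * i) % n =
      (a + m * i) % n + i - n * (if (n : ℤ) ≤ (a + m * i) % n + i then 1 else 0) := by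
    intro i hi
    have hi : (i : ℤ) < n := by exact_mod_cast mem_range.1 hi
    have hr₀ : 0 ≤ (a + m * i) % (n : ℤ) := Int.emod_nonneg _ (by omega)
    have hr₁ : (a + m * i) % (n : ℤ) < n := Int.emod_lt_of_pos _ (by omega)
    rw [emod_add_add_one_mul, emod_eq_ite_of_lt_two_mul (by omega) (by omega)]
    split_ifs <;> ring
  -- both residue sequences are permutations of `0, …, n - 1`, so the wraps account for `∑ i`
  have hK : (n : ℤ) * K = ∑ i ∈ range n, (i : ℤ) := by
    have h := sum_congr rfl hpoint
    rw [sum_emod_add_mul_range a hm', sum_sub_distrib, sum_add_distrib,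
      sum_emod_add_mul_range a hm, ← mul_sum, sum_boole] at h
    linarith
  have hK' : n * K = ∑ i ∈ range n, i := by
    rw [← Nat.cast_inj (R := ℤ)]
    push_cast
    exact hK
  rcases n.eq_zero_or_pos with rfl | hn
  · simp [K]
  · apply Nat.eq_of_mul_eq_mul_left hn
    rw [← mul_assoc, hK', sum_range_id_mul_two]

end Residues

theorem card_filter_emod_add_mul_add_eq (j : ℕ) (a m : ℤ)
    (hm' : IsCoprime (2 * j + 1 : ℤ) (m + 1)) :
    #{i ∈ range (2 * j + 1) | (a + m * (i : ℕ)) % (2 * j + 1) + i = 2 * j} = 1 := by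
  have h := card_filter_emod_add_mul_eq a (n := 2 * j + 1) (c := 2 * j)
    (by exact_mod_cast hm') (by omega) (by omega)
  push_cast at h
  refine (congrArg card (filter_congr fun i hi => ?_)).trans h
  have hi : (i : ℤ) < 2 * j + 1 := by exact_mod_cast mem_range.1 hi
  have hr₀ : 0 ≤ (a + m * i) % (2 * j + 1) := Int.emod_nonneg _ (by omega)
  have hr₁ : (a + m * i) % (2 * j + 1) < 2 * j + 1 := Int.emod_lt_of_pos _ (by omega)
  rw [emod_add_add_one_mul, emod_eq_ite_of_lt_two_mul (x := (a + m * i) % (2 * j + 1) + i)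
    (by omega) (by omega)]
  split_ifs <;> omega

theorem card_staircase_columns (j : ℕ) (a m : ℤ) (hm : IsCoprime (2 * j + 1 : ℤ) m)
    (hm' : IsCoprime (2 * j + 1 : ℤ) (m + 1)) :
    #{i ∈ range (2 * j) | (a + m * (i : ℕ)) % (2 * j + 1) + i < 2 * j} = j := by
  have hwraps := card_filter_le_emod_add_mul_add a m (n := 2 * j + 1)
    (by exact_mod_cast hm) (by exact_mod_cast hm')
  push_cast at hwraps
  have htop := card_filter_emod_add_mul_add_eq j a m hm'
  set P : ℕ → ℤ := fun i => (a + m * i) % (2 * j + 1) + i with hP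
  have hextend : #{i ∈ range (2 * j + 1) | P i < 2 * j} = #{i ∈ range (2 * j) | P i < 2 * j} := by
    have : 0 ≤ (a + m * (2 * j : ℕ)) % (2 * j + 1) := Int.emod_nonneg _ (by omega)
    rw [range_add_one, filter_insert, if_neg (by simp only [hP]; push_cast at this ⊢; omega)]
  have hcompl := card_filter_add_card_filter_not (s := range (2 * j + 1)) (fun i => P i < 2 * j + 1)
  have hsplit := card_filter_add_card_filter_not (s := {i ∈ range (2 * j + 1) | P i < 2 * j + 1})
    (fun i => P i < 2 * j)
  rw [filter_filter, filter_filter] at hsplit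
  have hbelow : {i ∈ range (2 * j + 1) | P i < 2 * j + 1 ∧ P i < 2 * j} =
      {i ∈ range (2 * j + 1) | P i < 2 * j} := filter_congr fun i _ => by omega
  have hat : {i ∈ range (2 * j + 1) | P i < 2 * j + 1 ∧ ¬P i < 2 * j} =
      {i ∈ range (2 * j + 1) | P i = 2 * j} := filter_congr fun i _ => by omega
  have hwrapped : {i ∈ range (2 * j + 1) | ¬P i < 2 * j + 1} =
      {i ∈ range (2 * j + 1) | 2 * j + 1 ≤ (a + m * (i : ℕ)) % (2 * j + 1) + i} :=
    filter_congr fun i _ => by simp only [hP]; omega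
  rw [hbelow, hat, htop, hextend] at hsplit
  rw [hwrapped, card_range] at hcompl
  show #{i ∈ range (2 * j) | P i < 2 * j} = j
  omega

theorem intCast_mem_Sstair_iff {j : ℕ} {x y : ℤ} :
    ((x : ℝ), (y : ℝ)) ∈ Sstair j ↔ 0 ≤ x ∧ 0 ≤ y ∧ x + y < 2 * j := by
  simp only [Sstair, Set.mem_iUnion, mem_range, Set.mem_prod, Set.mem_Ico, exists_prop]
  constructor
  · rintro ⟨i, -, ⟨hix, hxi⟩, hy₀, hy⟩
    have hix : (i : ℤ) ≤ x := by exact_mod_cast hix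
    have hxi : x < i + 1 := by exact_mod_cast hxi
    have hy₀ : 0 ≤ y := by exact_mod_cast hy₀
    have hy : y < 2 * j - i := by exact_mod_cast hy
    omega
  · rintro ⟨hx, hy, hxy⟩
    lift x to ℕ using hx
    have hyx : (y : ℝ) < 2 * j - x := by exact_mod_cast (by omega : y < 2 * j - x)
    exact ⟨x, by omega, ⟨by simp, by simp⟩, by exact_mod_cast hy, by simpa using hyx⟩

theorem mem_Lam_iff {m j : ℕ} {p : ℝ × ℝ} :
    p ∈ Lam m j ↔ ∃ x y : ℤ, p = ((x : ℝ), (y : ℝ)) ∧ y ≡ x * m [ZMOD 2 * j + 1] := by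
  constructor
  · rintro ⟨c₁, c₂, rfl⟩
    exact ⟨c₁, c₁ * m + c₂ * (2 * j + 1), by push_cast; rfl, Int.add_mul_emod_self_right _ _ _⟩
  · rintro ⟨x, y, rfl, h⟩
    obtain ⟨c, hc⟩ := h.symm.dvd
    have hy : (y : ℝ) = x * m + c * (2 * j + 1) := by
      exact_mod_cast (by linarith : y = x * m + c * (2 * j + 1))
    exact ⟨x, c, by rw [hy]⟩

theorem Lam_inter_translate_Sstair (m j : ℕ) (s t : ℤ) :
    Lam m j ∩ ((fun p : ℝ × ℝ => ((s : ℝ) + p.1, (t : ℝ) + p.2)) '' Sstair j) =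
      (fun i : ℕ => (((s + i : ℤ) : ℝ), ((t + (s * m - t + m * i) % (2 * j + 1) : ℤ) : ℝ))) ''
        ↑{i ∈ range (2 * j) | (s * m - t + m * (i : ℕ)) % (2 * j + 1) + i < 2 * j} := by
  ext p
  simp only [Set.mem_inter_iff, mem_Lam_iff, Set.mem_image, coe_filter, Set.mem_ofPred_eq,
    mem_range]
  constructor
  · rintro ⟨⟨x, y, rfl, hxy⟩, q, hq, hqp⟩
    have hq' : q = (((x - s : ℤ) : ℝ), ((y - t : ℤ) : ℝ)) := by
      rw [Prod.ext_iff] at hqp ⊢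
      push_cast
      constructor <;> linarith [hqp.1, hqp.2]
    rw [hq', intCast_mem_Sstair_iff] at hq
    obtain ⟨i, rfl⟩ : ∃ i : ℕ, x = s + i := ⟨(x - s).toNat, by omega⟩
    have hr : (s * m - t + m * i) % (2 * j + 1) = y - t := by
      have hyt : y - t < 2 * j + 1 := by omega
      rw [← Int.emod_eq_of_lt hq.2.1 hyt, (hxy.sub_right t).eq]
      ring_nf
    refine ⟨i, ⟨by omega, by omega⟩, ?_⟩
    rw [hr]
    push_cast
    ring_nf
  · rintro ⟨i, ⟨hi, hlt⟩, rfl⟩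
    have hr₀ : 0 ≤ (s * m - t + m * i) % (2 * j + 1) := Int.emod_nonneg _ (by omega)
    refine ⟨⟨s + i, _, rfl, ((Int.mod_modEq _ _).add_left t).trans ?_⟩,
      (((i : ℤ) : ℝ), (((s * m - t + m * i) % (2 * j + 1) : ℤ) : ℝ)),
      intCast_mem_Sstair_iff.2 ⟨by omega, hr₀, by omega⟩, ?_⟩
    · rw [show t + (s * m - t + m * i) = (s + i) * m by ring]
    · push_cast
      rfl

theorem ncard_Lam_inter_translate_Sstair (m j : ℕ) (s t : ℤ) :
    (Lam m j ∩ ((fun p : ℝ × ℝ => ((s : ℝ) + p.1, (t : ℝ) + p.2)) '' Sstair j)).ncard =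
      #{i ∈ range (2 * j) | (s * m - t + m * (i : ℕ)) % (2 * j + 1) + i < 2 * j} := by
  rw [Lam_inter_translate_Sstair, Set.ncard_image_of_injective _ fun i i' h => ?_,
    Set.ncard_coe_finset]
  simpa using congrArg Prod.fst h

theorem stmt7_general (j m : ℕ)
    (hgcd : Nat.gcd m (2 * j + 1) = 1) (hgcd' : Nat.gcd (m + 1) (2 * j + 1) = 1)
    (s t : ℤ) :
    (Lam m j ∩ ((fun p : ℝ × ℝ => ((s : ℝ) + p.1, (t : ℝ) + p.2)) '' Sstair j)).ncard = j := by
  have hm : IsCoprime (2 * j + 1 : ℤ) m := by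
    exact_mod_cast (Nat.isCoprime_iff_coprime.2 hgcd).symm
  have hm' : IsCoprime (2 * j + 1 : ℤ) (m + 1) := by
    exact_mod_cast (Nat.isCoprime_iff_coprime.2 hgcd').symm
  rw [ncard_Lam_inter_translate_Sstair]
  exact card_staircase_columns j _ m hm hm'

theorem stmt7 (j m : ℕ) (hj : 1 ≤ j) (hm1 : 1 ≤ m) (hm2 : m ≤ 2 * j + 1)
    (hgcd : Nat.gcd m (2 * j + 1) = 1) (hgcd' : Nat.gcd (m + 1) (2 * j + 1) = 1)
    (s t : ℤ) :
    (Lam m j ∩ ((fun p : ℝ × ℝ => ((s : ℝ) + p.1, (t : ℝ) + p.2)) '' Sstair j)).ncard = j :=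
  stmt7_general j m hgcd hgcd' s t
end

section
/- If n = p_1^{a_1} ⋯ p_s^{a_s} is the prime factorization of n and every prime p_i > k, then φ^k(n) = n · ∏_{i=1}^s (1 − k/p_i); if some p_i ≤ k then φ^k(n) = 0. -/
/-
Reducing modulo `n`, `phik k n` counts the residues `x` for which `x, x + 1, …, x + k - 1` are all
units of `ZMod n`. The Chinese remainder theorem makes this count multiplicative in coprime
factors. For a prime power `p ^ a` the condition only depends on `x mod p`, so the count is
`p ^ (a - 1)` times the number of `x < p` with `p ∤ x + i` for `i < k`, which is `p - k`. If a
prime `p ≤ k` divides `n`, every run of `k` consecutive integers contains a multiple of `p`.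
-/

def phik (k n : ℕ) : ℕ :=
  ((Finset.Icc 1 n).filter (fun m => ∀ i < k, Nat.gcd (m + i) n = 1)).card

open Finset Function

section UnitRun

variable {R S : Type*} [CommRing R] [CommRing S]

def UnitRun (k : ℕ) (x : R) : Prop := ∀ i < k, IsUnit (x + i)

theorem RingEquiv.unitRun_apply_iff (e : R ≃+* S) {k : ℕ} {x : R} :
    UnitRun k (e x) ↔ UnitRun k x := by
  simp only [UnitRun, ← map_natCast e, ← map_add, MulEquiv.isUnit_map]

theorem Prod.unitRun_iff {k : ℕ} {x : R × S} : UnitRun k x ↔ UnitRun k x.1 ∧ UnitRun k x.2 := by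
  simp only [UnitRun, Prod.isUnit_iff, Prod.fst_add, Prod.snd_add, Prod.fst_natCast,
    Prod.snd_natCast, ← forall₂_and]

theorem card_unitRun_prod (k : ℕ) :
    Nat.card {x : R × S // UnitRun k x} =
      Nat.card {x : R // UnitRun k x} * Nat.card {x : S // UnitRun k x} := by
  rw [← Nat.card_prod]
  exact Nat.card_congr ((Equiv.subtypeEquivRight fun _ => Prod.unitRun_iff).trans
    (Equiv.subtypeProdEquivProd))

theorem RingEquiv.card_unitRun_eq (e : R ≃+* S) (k : ℕ) :
    Nat.card {x : R // UnitRun k x} = Nat.card {x : S // UnitRun k x} :=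
  Nat.card_congr (e.toEquiv.subtypeEquiv fun _ => e.unitRun_apply_iff.symm)

end UnitRun

theorem ZMod.unitRun_natCast_iff {k n m : ℕ} :
    UnitRun k (m : ZMod n) ↔ ∀ i < k, Nat.Coprime (m + i) n := by
  simp only [UnitRun, ← Nat.cast_add, ZMod.isUnit_iff_coprime]

theorem Nat.count_mul_of_periodic {P : ℕ → Prop} [DecidablePred P] {d : ℕ} (hP : Periodic P d)
    (q : ℕ) : Nat.count P (q * d) = q * Nat.count P d := by
  induction q with
  | zero => simp
  | succ q ih =>
    rw [add_one_mul, Nat.count_add, ih, add_one_mul]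
    congr 2
    ext m
    rw [add_comm]
    exact (hP.nat_mul q m).to_iff

theorem Nat.exists_lt_dvd_add {p : ℕ} (hp : 0 < p) (m : ℕ) : ∃ i < p, p ∣ m + i := by
  have := NeZero.of_pos hp
  refine ⟨(-(m : ZMod p)).val, ZMod.val_lt _, ?_⟩
  rw [← ZMod.natCast_eq_zero_iff]
  simp

-- For `m < p` the run `m, …, m + k - 1` lies in `[0, 2p)`, so it can only meet `0` and `p`.
theorem Nat.count_forall_not_dvd_add {k p : ℕ} (hk : 1 ≤ k) (hkp : k ≤ p) :
    Nat.count (fun m => ∀ i < k, ¬ p ∣ m + i) p = p - k := by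
  rw [Nat.count_eq_card_filter_range, ← Nat.sub_zero (p - k), ← Nat.card_Ioc]
  congr 1
  ext m
  simp only [mem_filter, mem_range, mem_Ioc]
  constructor
  · rintro ⟨hmp, h⟩
    refine ⟨Nat.pos_of_ne_zero fun hm => h 0 hk (by simp [hm]), ?_⟩
    by_contra! hm
    exact h (p - m) (by omega) (by simp [Nat.add_sub_cancel' hmp.le])
  · rintro ⟨hm, hmk⟩
    exact ⟨by omega, fun i hi => Nat.not_dvd_of_pos_of_lt (by omega) (by omega)⟩

theorem phik_eq_count (k n : ℕ) :
    phik k n = Nat.count (fun m => ∀ i < k, Nat.Coprime (m + i) n) n := by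
  have hper : Periodic (fun m => ∀ i < k, Nat.Coprime (m + i) n) n := fun m => by
    simp only [add_right_comm m n, Nat.coprime_add_self_left]
  rw [phik, ← Nat.filter_Ico_card_eq_of_periodic 1 n _ hper, add_comm 1 n]
  rfl

theorem phik_eq_card_unitRun (k n : ℕ) [NeZero n] :
    phik k n = Nat.card {x : ZMod n // UnitRun k x} := by
  classical
  rw [phik_eq_count, Nat.count_eq_card_filter_range, Nat.card_eq_fintype_card,
    Fintype.card_subtype]
  refine card_nbij' (fun m => (m : ZMod n)) ZMod.val (fun m hm => ?_) (fun x hx => ?_)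
    (fun m hm => ?_) (fun x _ => ZMod.natCast_zmod_val x)
  · simp only [coe_filter, mem_range, mem_univ, true_and, Set.mem_ofPred_eq] at hm ⊢
    exact ZMod.unitRun_natCast_iff.mpr hm.2
  · simp only [coe_filter, mem_range, mem_univ, true_and, Set.mem_ofPred_eq] at hx ⊢
    exact ⟨ZMod.val_lt x, ZMod.unitRun_natCast_iff.mp (by rwa [ZMod.natCast_zmod_val])⟩
  · simp only [coe_filter, mem_range, Set.mem_ofPred_eq] at hm
    exact ZMod.val_cast_of_lt hm.1

theorem phik_mul {k a b : ℕ} (hab : a.Coprime b) : phik k (a * b) = phik k a * phik k b := by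
  rcases eq_or_ne a 0 with rfl | ha
  · simp [phik]
  rcases eq_or_ne b 0 with rfl | hb
  · simp [phik]
  have := NeZero.mk ha
  have := NeZero.mk hb
  rw [phik_eq_card_unitRun, phik_eq_card_unitRun, phik_eq_card_unitRun,
    (ZMod.chineseRemainder hab).card_unitRun_eq, card_unitRun_prod]

theorem phik_one (k : ℕ) : phik k 1 = 1 := by
  simp [phik]

theorem phik_prime_pow {k p a : ℕ} (hp : p.Prime) (hk : 1 ≤ k) (hkp : k ≤ p) (ha : a ≠ 0) :
    phik k (p ^ a) = p ^ (a - 1) * (p - k) := by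
  have hcop : ∀ m, (∀ i < k, Nat.Coprime (m + i) (p ^ a)) ↔ ∀ i < k, ¬ p ∣ m + i := fun m => by
    simp only [Nat.coprime_pow_right_iff (Nat.pos_of_ne_zero ha), Nat.coprime_comm,
      hp.coprime_iff_not_dvd]
  have hper : Periodic (fun m => ∀ i < k, ¬ p ∣ m + i) p := fun m => by
    simp only [add_right_comm m p, Nat.dvd_add_self_right]
  rw [phik_eq_count]
  simp_rw [hcop]
  rw [← pow_sub_one_mul ha, Nat.count_mul_of_periodic hper, Nat.count_forall_not_dvd_add hk hkp]

theorem cast_phik_prime_pow {k p a : ℕ} (hp : p.Prime) (hk : 1 ≤ k) (hkp : k ≤ p) (ha : a ≠ 0) :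
    (phik k (p ^ a) : ℚ) = p ^ a * (1 - k / p) := by
  rw [phik_prime_pow hp hk hkp ha, Nat.cast_mul, Nat.cast_sub hkp, Nat.cast_pow,
    ← pow_sub_one_mul ha (p : ℚ)]
  field_simp [hp.ne_zero]

theorem phik_eq_zero_of_dvd {k n p : ℕ} (hp : p.Prime) (hpn : p ∣ n) (hpk : p ≤ k) :
    phik k n = 0 := by
  rw [phik, card_eq_zero, filter_eq_empty_iff]
  intro m _ h
  obtain ⟨i, hi, hdvd⟩ := Nat.exists_lt_dvd_add hp.pos m
  exact Nat.not_coprime_of_dvd_of_dvd hp.one_lt hdvd hpn (h i (hi.trans_le hpk))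

theorem stmt14 (k n : ℕ) (hk : 1 ≤ k) (hn : 1 ≤ n) :
    ((∀ p ∈ n.primeFactors, k < p) →
      (phik k n : ℚ) = n * ∏ p ∈ n.primeFactors, (1 - (k : ℚ) / p)) ∧
    ((∃ p ∈ n.primeFactors, p ≤ k) → phik k n = 0) := by
  refine ⟨fun hlarge => ?_, fun ⟨p, hp, hpk⟩ => phik_eq_zero_of_dvd
    (Nat.prime_of_mem_primeFactors hp) (Nat.dvd_of_mem_primeFactors hp) hpk⟩
  have hn0 : n ≠ 0 := Nat.one_le_iff_ne_zero.mp hn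
  rw [Nat.multiplicative_factorization (phik k) (fun _ _ => phik_mul) (phik_one k) hn0,
    Nat.prod_factorization_eq_prod_primeFactors, Nat.cast_prod]
  have hn_prod : (n : ℚ) = ∏ p ∈ n.primeFactors, (p : ℚ) ^ n.factorization p := by
    exact_mod_cast Nat.prod_primeFactors_pow_factorization hn0
  rw [hn_prod, ← prod_mul_distrib]
  refine prod_congr rfl fun p hp => ?_
  have hpp := Nat.prime_of_mem_primeFactors hp
  exact cast_phik_prime_pow hpp hk (hlarge p hp).le
    (hpp.factorization_pos_of_dvd hn0 (Nat.dvd_of_mem_primeFactors hp)).ne'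
end
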